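/- The set function C_V satisfies: (i) C_V(E) ≤ sup_{y ∈ E} (∫_Ω K^Ω(x,y) V(x) ρ(x) dx)^{-1} for every Borel set E ⊂ ∂Ω, with equality when E is compact; (ii) C_V(E₁ ∪ E₂) = max{C_V(E₁), C_V(E₂)} for all Borel sets E₁, E₂ ⊂ ∂Ω. -/

import Mathlib

/- Common setup for the formalization of
   "Boundary value problems with measures for elliptic equations with singular potentials"
   by L. Véron and C. Yarur.

   Ω ⊂ ℝ^N is a bounded C² domain, V ∈ L^∞_loc(Ω) is a (nonnegative) potential,
   ρ is the first eigenfunction of -Δ in W₀^{1,2}(Ω), K = K^Ω is the Poisson kernel of Ω,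
   nrm is the outward unit normal field on ∂Ω. -/

noncomputable section

open MeasureTheory Metric Set Filter Topology ENNReal

/-- Euclidean space ℝ^N. -/
abbrev Euc (N : ℕ) := EuclideanSpace ℝ (Fin N)

variable {N : ℕ}

/-- The Laplacian Δf(x), computed as the trace of the second derivative on the
standard orthonormal basis. -/
def lap (f : Euc N → ℝ) (x : Euc N) : ℝ :=
  ∑ i : Fin N,
    iteratedFDeriv ℝ 2 f x ![EuclideanSpace.single i (1 : ℝ), EuclideanSpace.single i (1 : ℝ)]

/-- A bounded open set with C² boundary: near every boundary point, Ω is the sublevel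
set of a C² function with nonvanishing gradient. -/
def IsC2Domain (Ω : Set (Euc N)) : Prop :=
  IsOpen Ω ∧ Bornology.IsBounded Ω ∧ Ω.Nonempty ∧
  ∀ z ∈ frontier Ω, ∃ U : Set (Euc N), IsOpen U ∧ z ∈ U ∧
    ∃ f : Euc N → ℝ, ContDiffOn ℝ 2 f U ∧
      (∀ x ∈ U, (x ∈ Ω ↔ f x < 0) ∧ (x ∈ frontier Ω ↔ f x = 0)) ∧
      ∀ x ∈ U, fderiv ℝ f x ≠ 0

/-- The outward unit normal field on ∂Ω. -/
def IsOuterNormal (Ω : Set (Euc N)) (nrm : Euc N → Euc N) : Prop :=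
  ∀ y ∈ frontier Ω, ‖nrm y‖ = 1 ∧ ∀ᶠ t in 𝓝[>] (0 : ℝ), y + t • nrm y ∉ closure Ω

/-- The normal derivative ∂ζ/∂n of ζ at a boundary point y. -/
def normalDeriv (Ω : Set (Euc N)) (nrm : Euc N → Euc N) (ζ : Euc N → ℝ) (y : Euc N) : ℝ :=
  fderivWithin ℝ ζ (closure Ω) y (nrm y)

/-- Test functions for the weak formulation: ζ ∈ C¹(Ω̄), ζ = 0 on ∂Ω, Δζ ∈ L^∞(Ω). -/
def IsTestFun (Ω : Set (Euc N)) (ζ : Euc N → ℝ) : Prop :=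
  ContDiffOn ℝ 1 ζ (closure Ω) ∧ (∀ y ∈ frontier Ω, ζ y = 0) ∧
  ∃ C : ℝ, ∀ x ∈ Ω, |lap ζ x| ≤ C

/-- V ∈ L^∞_loc(Ω). -/
def LocBddOn (Ω : Set (Euc N)) (V : Euc N → ℝ) : Prop :=
  ∀ K : Set (Euc N), K ⊆ Ω → IsCompact K → ∃ C : ℝ, ∀ x ∈ K, |V x| ≤ C

/-- ρ is the (positive, normalized up to a constant) first eigenfunction of -Δ in
W₀^{1,2}(Ω), with eigenvalue lam > 0. -/
def IsFirstEigenfunction (Ω : Set (Euc N)) (ρ : Euc N → ℝ) : Prop :=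
  ∃ lam : ℝ, 0 < lam ∧ ContinuousOn ρ (closure Ω) ∧ ContDiffOn ℝ 2 ρ Ω ∧
    (∀ x ∈ Ω, 0 < ρ x) ∧ (∀ y ∈ frontier Ω, ρ y = 0) ∧
    ∀ x ∈ Ω, - lap ρ x = lam * ρ x

/-- A bounded (Radon) measure on ∂Ω: a finite measure concentrated on the boundary. -/
def BoundaryMeasure (Ω : Set (Euc N)) (μ : Measure (Euc N)) : Prop :=
  IsFiniteMeasure μ ∧ μ (frontier Ω)ᶜ = 0

/-- u is a weak solution of -Δu + Vu = 0 in Ω, u = μ on ∂Ω (μ a positive bounded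
measure on ∂Ω): u ∈ L¹(Ω), Vu ∈ L¹_ρ(Ω) and
∫_Ω (-uΔζ + Vuζ) = -∫_{∂Ω} (∂ζ/∂n) dμ for every test function ζ. -/
def IsWeakSolution (Ω : Set (Euc N)) (V ρ : Euc N → ℝ) (nrm : Euc N → Euc N)
    (μ : Measure (Euc N)) (u : Euc N → ℝ) : Prop :=
  IntegrableOn u Ω volume ∧
  IntegrableOn (fun x => V x * u x * ρ x) Ω volume ∧
  ∀ ζ : Euc N → ℝ, IsTestFun Ω ζ →
    ∫ x in Ω, (-(u x) * lap ζ x + V x * u x * ζ x) =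
      - ∫ y, normalDeriv Ω nrm ζ y ∂μ

/-- Weak solution for a signed boundary measure μ = μp - μm. -/
def IsWeakSolutionSigned (Ω : Set (Euc N)) (V ρ : Euc N → ℝ) (nrm : Euc N → Euc N)
    (μp μm : Measure (Euc N)) (u : Euc N → ℝ) : Prop :=
  IntegrableOn u Ω volume ∧
  IntegrableOn (fun x => V x * u x * ρ x) Ω volume ∧
  ∀ ζ : Euc N → ℝ, IsTestFun Ω ζ →
    ∫ x in Ω, (-(u x) * lap ζ x + V x * u x * ζ x) =
      - (∫ y, normalDeriv Ω nrm ζ y ∂μp - ∫ y, normalDeriv Ω nrm ζ y ∂μm)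

/-- μ is a good measure: the boundary value problem with data μ admits a weak solution. -/
def GoodMeasure (Ω : Set (Euc N)) (V ρ : Euc N → ℝ) (nrm : Euc N → Euc N)
    (μ : Measure (Euc N)) : Prop :=
  ∃ u : Euc N → ℝ, IsWeakSolution Ω V ρ nrm μ u

/-- The Poisson potential 𝕂[μ](x) = ∫_{∂Ω} K(x,y) dμ(y), as an extended real. -/
def poissonPot (K : Euc N → Euc N → ℝ) (μ : Measure (Euc N)) (x : Euc N) : ℝ≥0∞ :=
  ∫⁻ y, ENNReal.ofReal (K x y) ∂μ

/-- K is the Poisson kernel of the operator -Δ + W in Ω: K ≥ 0, K(x,·) is continuous on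
∂Ω, and for every bounded measure μ on ∂Ω the function x ↦ ∫_{∂Ω} K(x,y) dμ(y)
is the weak solution of -Δu + Wu = 0, u = μ on ∂Ω.  (`W = 0` gives the usual
Poisson kernel K^Ω of Ω.) -/
def IsPoissonKernelFor (Ω : Set (Euc N)) (W ρ : Euc N → ℝ) (nrm : Euc N → Euc N)
    (K : Euc N → Euc N → ℝ) : Prop :=
  (∀ x ∈ Ω, ∀ y ∈ frontier Ω, 0 ≤ K x y) ∧
  (∀ x ∈ Ω, ContinuousOn (fun y => K x y) (frontier Ω)) ∧
  ∀ μ : Measure (Euc N), BoundaryMeasure Ω μ →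
    IsWeakSolution Ω W ρ nrm μ (fun x => ∫ y, K x y ∂μ)

/-- A positive measure μ on ∂Ω is admissible: ∫_Ω 𝕂[μ] V ρ dx < ∞. -/
def Admissible (Ω : Set (Euc N)) (V ρ : Euc N → ℝ) (K : Euc N → Euc N → ℝ)
    (μ : Measure (Euc N)) : Prop :=
  ∫⁻ x in Ω, poissonPot K μ x * ENNReal.ofReal (V x * ρ x) < ⊤

/-- The singular boundary set Z_V = {y ∈ ∂Ω : ∫_Ω K^Ω(x,y) V(x) ρ(x) dx = ∞}. -/
def ZV (Ω : Set (Euc N)) (V ρ : Euc N → ℝ) (K : Euc N → Euc N → ℝ) : Set (Euc N) :=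
  {y | y ∈ frontier Ω ∧ ∫⁻ x in Ω, ENNReal.ofReal (K x y * V x * ρ x) = ⊤}

/-- Uniform vanishing condition (2.19): ∫_E K^Ω(x,y) V(x) ρ(x) dx → 0 as |E| → 0,
uniformly with respect to y ∈ ∂Ω. -/
def UnifVanishing (Ω : Set (Euc N)) (V ρ : Euc N → ℝ) (K : Euc N → Euc N → ℝ) : Prop :=
  ∀ ε : ℝ, 0 < ε → ∃ δ : ℝ, 0 < δ ∧ ∀ E : Set (Euc N), E ⊆ Ω → MeasurableSet E →
    volume E < ENNReal.ofReal δ →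
    ∀ y ∈ frontier Ω, ∫⁻ x in E, ENNReal.ofReal (K x y * V x * ρ x) < ENNReal.ofReal ε

/-- G is the Green kernel of -Δ in Ω: G ≥ 0, symmetric, and u = 𝔾[f] satisfies
-Δu = f, u = 0 on ∂Ω weakly, for nonnegative data f. -/
def IsGreenKernel (Ω : Set (Euc N)) (G : Euc N → Euc N → ℝ) : Prop :=
  (∀ x y, 0 ≤ G x y) ∧ (∀ x y, G x y = G y x) ∧
  ∀ f : Euc N → ℝ, (∀ x, 0 ≤ f x) →
    IntegrableOn (fun x => ∫ y in Ω, G x y * f y) Ω volume →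
    IntegrableOn f Ω volume →
    ∀ ζ : Euc N → ℝ, IsTestFun Ω ζ →
      ∫ x in Ω, -(∫ y in Ω, G x y * f y) * lap ζ x = ∫ x in Ω, f x * ζ x

/-- KV = K_V^Ω is the relaxed kernel of -Δ + V in Ω: the decreasing limit of the Poisson
kernels of -Δ + Vχ_{Ω_n}, for an increasing exhaustion {Ω_n} of Ω by smooth domains
with closures contained in Ω. -/
def IsRelaxedKernel (Ω : Set (Euc N)) (V ρ : Euc N → ℝ) (nrm : Euc N → Euc N)
    (KV : Euc N → Euc N → ℝ) : Prop :=
  ∃ Ωn : ℕ → Set (Euc N),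
    (∀ n, IsOpen (Ωn n) ∧ closure (Ωn n) ⊆ Ωn (n + 1) ∧ closure (Ωn n) ⊆ Ω) ∧
    (⋃ n, Ωn n) = Ω ∧
    ∃ Kn : ℕ → Euc N → Euc N → ℝ,
      (∀ n, IsPoissonKernelFor Ω ((Ωn n).indicator V) ρ nrm (Kn n)) ∧
      (∀ x ∈ Ω, ∀ y ∈ frontier Ω, Antitone fun n => Kn n x y) ∧
      (∀ x ∈ Ω, ∀ y ∈ frontier Ω, Tendsto (fun n => Kn n x y) atTop (𝓝 (KV x y)))

/-- ν* is the reduced measure associated to ν: the boundary trace of the nonnegative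
harmonic function 𝕂_V[ν] + 𝔾[V 𝕂_V[ν]], i.e. the bounded measure ν* on ∂Ω with
𝕂_V[ν] + 𝔾[V 𝕂_V[ν]] = 𝕂[ν*] in Ω. -/
def IsReducedMeasure (Ω : Set (Euc N)) (V : Euc N → ℝ) (K G KV : Euc N → Euc N → ℝ)
    (ν νstar : Measure (Euc N)) : Prop :=
  BoundaryMeasure Ω νstar ∧
  ∀ x ∈ Ω, (∫ y, KV x y ∂ν) + (∫ y in Ω, G x y * V y * (∫ z, KV y z ∂ν)) =
    ∫ y, K x y ∂νstar

/-- The vanishing set Z_V^* of the kernel K_V^Ω (independent of x ∈ Ω by Harnack). -/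
def ZVstar (Ω : Set (Euc N)) (KV : Euc N → Euc N → ℝ) : Set (Euc N) :=
  {y | y ∈ frontier Ω ∧ ∀ x ∈ Ω, KV x y = 0}

/-- u ∈ C(Ω) is a positive solution of -Δu + Vu = 0 in Ω (in the sense of
distributions). -/
def IsPositiveSolution (Ω : Set (Euc N)) (V u : Euc N → ℝ) : Prop :=
  ContinuousOn u Ω ∧ (∀ x ∈ Ω, 0 < u x) ∧
  ∀ ζ : Euc N → ℝ, ContDiff ℝ (⊤ : ℕ∞) ζ → HasCompactSupport ζ → tsupport ζ ⊆ Ω →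
    ∫ x in Ω, (-(u x) * lap ζ x + V x * u x * ζ x) = 0

/-- z ∈ ∂Ω is a regular boundary point of u: ∫_{U∩Ω} V u ρ dx < ∞ for some
neighborhood U of z. -/
def IsRegularPoint (Ω : Set (Euc N)) (V ρ u : Euc N → ℝ) (z : Euc N) : Prop :=
  z ∈ frontier Ω ∧ ∃ U : Set (Euc N), IsOpen U ∧ z ∈ U ∧
    ∫⁻ x in U ∩ Ω, ENNReal.ofReal (V x * u x * ρ x) < ⊤

/-- The set R(u) of regular boundary points of u. -/
def regSet (Ω : Set (Euc N)) (V ρ u : Euc N → ℝ) : Set (Euc N) :=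
  {z | IsRegularPoint Ω V ρ u z}

/-- The singular boundary set S(u) = ∂Ω ∖ R(u). -/
def singSet (Ω : Set (Euc N)) (V ρ u : Euc N → ℝ) : Set (Euc N) :=
  frontier Ω \ regSet Ω V ρ u

/-- Σ_ε = {x ∈ Ω : dist(x,∂Ω) = ε}. -/
def SigmaSet (Ω : Set (Euc N)) (ε : ℝ) : Set (Euc N) :=
  {x | x ∈ Ω ∧ infDist x (frontier Ω) = ε}

/-- σ is the projection onto ∂Ω, defined (and unique) for points at distance ≤ ε₀ from
the boundary. -/
def IsBoundaryProjection (Ω : Set (Euc N)) (ε₀ : ℝ) (σ : Euc N → Euc N) : Prop :=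
  ∀ x ∈ Ω, infDist x (frontier Ω) ≤ ε₀ →
    σ x ∈ frontier Ω ∧ dist x (σ x) = infDist x (frontier Ω)

/-- γ is the boundary trace of v : for every ζ ∈ C(∂Ω),
∫_{Σ_ε} ζ(σ(x)) v(x) dS(x) → ∫_{∂Ω} ζ dγ as ε → 0, where dS is the surface
((N-1)-dimensional Hausdorff) measure. -/
def HasBoundaryTrace (Ω : Set (Euc N)) (σ : Euc N → Euc N) (v : Euc N → ℝ)
    (γ : Measure (Euc N)) : Prop :=
  BoundaryMeasure Ω γ ∧
  ∀ ζ : Euc N → ℝ, Continuous ζ →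
    Tendsto (fun ε : ℝ => ∫ x in SigmaSet Ω ε, ζ (σ x) * v x ∂(μH[(N : ℝ) - 1]))
      (𝓝[>] 0) (𝓝 (∫ z, ζ z ∂γ))

/-- μu is the regular part of the boundary trace of u: a Radon measure on R(u)
(finite on compact subsets of R(u), vanishing outside R(u)) such that
∫_{Σ_ε} ζ(σ(x)) u(x) dS(x) → ∫ ζ dμu for every ζ ∈ C_c(R(u)). -/
def IsRegularTrace (Ω : Set (Euc N)) (V ρ u : Euc N → ℝ) (σ : Euc N → Euc N)
    (μu : Measure (Euc N)) : Prop :=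
  μu (regSet Ω V ρ u)ᶜ = 0 ∧
  (∀ Kc : Set (Euc N), IsCompact Kc → Kc ⊆ regSet Ω V ρ u → μu Kc < ⊤) ∧
  ∀ ζ : Euc N → ℝ, Continuous ζ →
    closure {z | z ∈ frontier Ω ∧ ζ z ≠ 0} ⊆ regSet Ω V ρ u →
    Tendsto (fun ε : ℝ => ∫ x in SigmaSet Ω ε, ζ (σ x) * u x ∂(μH[(N : ℝ) - 1]))
      (𝓝[>] 0) (𝓝 (∫ z, ζ z ∂μu))

/-- The sweeping measure ν_S(A) = sup{γ_u(μ)(A) : μ ∈ 𝔐₊(S(u)) good}, where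
γ_u(μ) is the boundary trace of v_μ = min{u, u_μ}. -/
def nuS (Ω : Set (Euc N)) (V ρ : Euc N → ℝ) (nrm σ : Euc N → Euc N) (u : Euc N → ℝ)
    (A : Set (Euc N)) : ℝ≥0∞ :=
  ⨆ (μ : Measure (Euc N)) (_ : BoundaryMeasure Ω μ) (_ : μ (singSet Ω V ρ u)ᶜ = 0)
    (uμ : Euc N → ℝ) (_ : IsWeakSolution Ω V ρ nrm μ uμ)
    (γ : Measure (Euc N)) (_ : HasBoundaryTrace Ω σ (fun x => min (u x) (uμ x)) γ),
      γ A

/-- The capacity C_V(E) = sup{μ(E) : μ ∈ 𝔐₊(∂Ω), μ(Eᶜ) = 0, ‖V𝕂[μ]‖_{L¹_ρ} ≤ 1}. -/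
def capaV (Ω : Set (Euc N)) (V ρ : Euc N → ℝ) (K : Euc N → Euc N → ℝ)
    (E : Set (Euc N)) : ℝ≥0∞ :=
  ⨆ (μ : Measure (Euc N)) (_ : IsFiniteMeasure μ) (_ : μ ((frontier Ω)ᶜ) = 0)
    (_ : μ Eᶜ = 0)
    (_ : ∫⁻ x in Ω, poissonPot K μ x * ENNReal.ofReal (V x * ρ x) ≤ 1), μ E

/-! Testing the capacity with the measures `r • δ_y`, `y ∈ E`, gives
`(∫_Ω K(x,y) V ρ dx)⁻¹ ≤ C_V(E)`. Conversely, for an admissible `μ` carried by `E`, Tonelli gives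
`μ(E) · inf_{y ∈ E} ∫_Ω K(x,y) V ρ dx ≤ ∫_Ω 𝕂[μ] V ρ dx ≤ 1`. So `C_V(E)` is the supremum for
every Borel set `E`, and the max property is the supremum over a union.

Tonelli needs care: `K(x,y)` is only known to be measurable in `x` for each `y` and continuous
in `y ∈ ∂Ω`, and `V` is not assumed measurable. A Carathéodory argument along a countable dense
set makes `K` jointly measurable after discarding a null set of `x`, and `V ρ` is replaced by a
measurable minorant with the same integral against every finite measurable function. -/

open TopologicalSpace

theorem exists_measurable_le_forall_lintegral_mul_eq {α : Type*} [MeasurableSpace α]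
    (ν : Measure α) [SFinite ν] (w : α → ℝ≥0∞) :
    ∃ w' : α → ℝ≥0∞, Measurable w' ∧ w' ≤ w ∧
      ∀ h : α → ℝ≥0∞, Measurable h → (∀ x, h x ≠ ∞) →
        ∫⁻ x, h x * w x ∂ν = ∫⁻ x, h x * w' x ∂ν := by
  obtain ⟨w', hw'm, hw'w, hν⟩ := exists_measurable_le_withDensity_eq ν w
  refine ⟨w', hw'm, hw'w, fun h hm htop => le_antisymm ?_
    (lintegral_mono fun x => mul_le_mul_right (hw'w x) _)⟩
  rw [← iSup_lintegral_measurable_le_eq_lintegral]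
  refine iSup₂_le fun φ hφm => iSup_le fun hφ => ?_
  have hφ_eq : ∀ x, φ x = φ x / h x * h x := fun x => by
    rcases eq_or_ne (h x) 0 with h0 | h0
    · simpa [h0] using hφ x
    · exact (ENNReal.div_mul_cancel h0 (htop x)).symm
  calc ∫⁻ x, φ x ∂ν = ∫⁻ x, φ x / h x * h x ∂ν := lintegral_congr hφ_eq
    _ = ∫⁻ x, h x ∂ν.withDensity (fun x => φ x / h x) :=
        (lintegral_withDensity_eq_lintegral_mul _ (hφm.div hm) hm).symm
    _ ≤ ∫⁻ x, h x ∂ν.withDensity w' := by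
        rw [hν]
        refine lintegral_mono' (withDensity_mono (ae_of_all _ fun x => ?_)) le_rfl
        exact ENNReal.div_le_of_le_mul (by rw [mul_comm]; exact hφ x)
    _ = ∫⁻ x, h x * w' x ∂ν := by
        rw [lintegral_withDensity_eq_lintegral_mul _ hw'm hm]
        simp_rw [Pi.mul_apply, mul_comm]

section Caratheodory

variable {X ι : Type*} [MeasurableSpace X] {ν : Measure X}
  [TopologicalSpace ι] [MetrizableSpace ι] [SecondCountableTopology ι]
  [MeasurableSpace ι] [OpensMeasurableSpace ι]

theorem exists_measurable_uncurry_indicator_of_continuous_of_aemeasurable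
    {g : X → ι → ℝ≥0∞} (hcont : ∀ᵐ x ∂ν, Continuous (g x))
    (hmeas : ∀ i, AEMeasurable (g · i) ν) :
    ∃ G : Set X, MeasurableSet G ∧ ν Gᶜ = 0 ∧
      Measurable fun p : X × ι => G.indicator (g · p.2) p.1 := by
  obtain ⟨D, hDc, hDd⟩ := exists_countable_dense ι
  have : Countable D := hDc.to_subtype
  set m : D → X → ℝ≥0∞ := fun d => (hmeas d).mk
  have hgood : ∀ᵐ x ∂ν, Continuous (g x) ∧ ∀ d : D, g x d = m d x :=
    hcont.and (ae_all_iff.2 fun d => (hmeas d).ae_eq_mk)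
  set G := (toMeasurable ν {x | ¬(Continuous (g x) ∧ ∀ d : D, g x d = m d x)})ᶜ
  have hG : ∀ x ∈ G, Continuous (g x) ∧ ∀ d : D, g x d = m d x := fun x hx => by
    by_contra h
    exact hx (subset_toMeasurable _ _ h)
  have hGm : MeasurableSet G := (measurableSet_toMeasurable _ _).compl
  refine ⟨G, hGm, ?_, ?_⟩
  · rw [compl_compl, measure_toMeasurable]
    exact ae_iff.1 hgood
  have hcont' : ∀ x, Continuous fun i => G.indicator (g · i) x := fun x => by
    by_cases hx : x ∈ G
    · simpa [indicator_of_mem hx] using (hG x hx).1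
    · simpa [indicator_of_notMem hx] using continuous_const
  -- `g x i` is a limit of `g x d` with `d ∈ D`, where measurable versions are available
  have hmeas' : ∀ i, Measurable fun x => G.indicator (g · i) x := fun i => by
    obtain ⟨s, hsD, hs⟩ := mem_closure_iff_seq_limit.1 (hDd.closure_eq ▸ mem_univ i)
    refine measurable_of_tendsto_metrizable
      (fun n => (hmeas (s n)).measurable_mk.indicator hGm)
      (tendsto_pi_nhds.2 fun x => ?_)
    by_cases hx : x ∈ G
    · simp only [indicator_of_mem hx]
      refine (((hG x hx).1.tendsto i).comp hs).congr fun n => ?_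
      exact (hG x hx).2 ⟨s n, hsD n⟩
    · simp only [indicator_of_notMem hx]
      exact tendsto_const_nhds
  exact (measurable_uncurry_of_continuous_of_measurable hcont' hmeas').comp measurable_swap

theorem lintegral_lintegral_mul_le_of_continuous [SFinite ν] {μ : Measure ι} [SFinite μ]
    {g : X → ι → ℝ≥0∞} (hg_top : ∀ x i, g x i ≠ ∞) (hcont : ∀ᵐ x ∂ν, Continuous (g x))
    (hmeas : ∀ i, AEMeasurable (g · i) ν) (w : X → ℝ≥0∞) :
    ∫⁻ i, ∫⁻ x, g x i * w x ∂ν ∂μ ≤ ∫⁻ x, (∫⁻ i, g x i ∂μ) * w x ∂ν := by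
  obtain ⟨G, -, hG, hGg⟩ :=
    exists_measurable_uncurry_indicator_of_continuous_of_aemeasurable hcont hmeas
  obtain ⟨w', hw'm, hw'w, hw'⟩ := exists_measurable_le_forall_lintegral_mul_eq ν w
  set g' : X → ι → ℝ≥0∞ := fun x i => G.indicator (g · i) x
  have hg'_ae : ∀ i, (g' · i) =ᵐ[ν] (g · i) := fun i =>
    (measure_eq_zero_iff_ae_notMem.1 hG).mono fun x hx => indicator_of_mem (not_not.1 hx) _
  have hg'_top : ∀ x i, g' x i ≠ ∞ := fun x i =>
    ne_top_of_le_ne_top (hg_top x i) (indicator_le_self _ _ x)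
  calc ∫⁻ i, ∫⁻ x, g x i * w x ∂ν ∂μ = ∫⁻ i, ∫⁻ x, g' x i * w' x ∂ν ∂μ := by
        refine lintegral_congr fun i => ?_
        rw [← hw' (g' · i) (hGg.comp measurable_prodMk_right) (hg'_top · i)]
        exact lintegral_congr_ae (((hg'_ae i).mul EventuallyEq.rfl).symm)
    _ = ∫⁻ x, ∫⁻ i, g' x i * w' x ∂μ ∂ν :=
        lintegral_lintegral_swap ((hGg.comp measurable_swap).mul
          (hw'm.comp measurable_snd)).aemeasurable
    _ = ∫⁻ x, (∫⁻ i, g' x i ∂μ) * w' x ∂ν :=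
        lintegral_congr fun x => lintegral_mul_const _ (hGg.comp measurable_prodMk_left)
    _ ≤ ∫⁻ x, (∫⁻ i, g x i ∂μ) * w x ∂ν :=
        lintegral_mono fun x => mul_le_mul' (lintegral_mono fun i => indicator_le_self _ _ x)
          (hw'w x)

end Caratheodory

theorem lintegral_lintegral_mul_le_of_continuousOn {X Y : Type*} [MeasurableSpace X]
    {ν : Measure X} [SFinite ν] [TopologicalSpace Y] [MetrizableSpace Y]
    [SecondCountableTopology Y] [MeasurableSpace Y] [OpensMeasurableSpace Y]
    {F : Set Y} (hF : MeasurableSet F) {μ : Measure Y} [IsFiniteMeasure μ] (hμF : μ Fᶜ = 0)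
    {g : X → Y → ℝ≥0∞} (hg_top : ∀ x y, g x y ≠ ∞) (hcont : ∀ᵐ x ∂ν, ContinuousOn (g x) F)
    (hmeas : ∀ y ∈ F, AEMeasurable (g · y) ν) (w : X → ℝ≥0∞) :
    ∫⁻ y, ∫⁻ x, g x y * w x ∂ν ∂μ ≤ ∫⁻ x, (∫⁻ y, g x y ∂μ) * w x ∂ν := by
  have hμ : ∀ f : Y → ℝ≥0∞, ∫⁻ y, f y ∂μ = ∫⁻ y : F, f y ∂μ.comap (↑) := fun f => by
    rw [lintegral_subtype_comap hF, Measure.restrict_eq_self_of_ae_mem hμF]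
  simp only [hμ]
  exact lintegral_lintegral_mul_le_of_continuous (g := fun x (y : F) => g x y)
    (fun x y => hg_top x y) (hcont.mono fun x hx => continuousOn_iff_continuous_domRestrict.1 hx)
    (fun y => hmeas y y.2) w

section Capacity

variable {Ω : Set (Euc N)} {V ρ W : Euc N → ℝ} {nrm : Euc N → Euc N}
  {K : Euc N → Euc N → ℝ} {E : Set (Euc N)}

theorem le_capaV (μ : Measure (Euc N)) [IsFiniteMeasure μ] (hμΩ : μ (frontier Ω)ᶜ = 0)
    (hμE : μ Eᶜ = 0)
    (hμ : ∫⁻ x in Ω, poissonPot K μ x * ENNReal.ofReal (V x * ρ x) ≤ 1) :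
    μ E ≤ capaV Ω V ρ K E :=
  le_iSup_of_le μ <| le_iSup_of_le inferInstance <| le_iSup_of_le hμΩ <|
    le_iSup_of_le hμE <| le_iSup_of_le hμ le_rfl

theorem capaV_le {c : ℝ≥0∞}
    (h : ∀ μ : Measure (Euc N), IsFiniteMeasure μ → μ (frontier Ω)ᶜ = 0 → μ Eᶜ = 0 →
      ∫⁻ x in Ω, poissonPot K μ x * ENNReal.ofReal (V x * ρ x) ≤ 1 → μ E ≤ c) :
    capaV Ω V ρ K E ≤ c :=
  iSup_le fun μ => iSup_le fun hμ => iSup_le fun hμΩ => iSup_le fun hμE =>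
    iSup_le fun hadm => h μ hμ hμΩ hμE hadm

theorem boundaryMeasure_dirac {y : Euc N} (hy : y ∈ frontier Ω) :
    BoundaryMeasure Ω (Measure.dirac y) := by
  refine ⟨inferInstance, ?_⟩
  rw [Measure.dirac_apply' _ isClosed_frontier.measurableSet.compl]
  exact indicator_of_notMem (not_not.2 hy) _

theorem IsPoissonKernelFor.aemeasurable (hK : IsPoissonKernelFor Ω W ρ nrm K) {y : Euc N}
    (hy : y ∈ frontier Ω) : AEMeasurable (fun x => K x y) (volume.restrict Ω) := by
  have hint := (hK.2.2 _ (boundaryMeasure_dirac hy)).1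
  simp only [integral_dirac] at hint
  exact hint.aemeasurable

theorem IsPoissonKernelFor.setLIntegral_ofReal_mul (hK : IsPoissonKernelFor Ω W ρ nrm K)
    (hΩ : MeasurableSet Ω) {y : Euc N} (hy : y ∈ frontier Ω) :
    ∫⁻ x in Ω, ENNReal.ofReal (K x y * V x * ρ x) =
      ∫⁻ x in Ω, ENNReal.ofReal (K x y) * ENNReal.ofReal (V x * ρ x) :=
  setLIntegral_congr_fun hΩ fun x hx => by rw [mul_assoc, ENNReal.ofReal_mul (hK.1 x hx y hy)]

theorem IsPoissonKernelFor.inv_le_capaV (hK : IsPoissonKernelFor Ω W ρ nrm K)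
    (hΩ : MeasurableSet Ω) (hE : E ⊆ frontier Ω) (hEm : MeasurableSet E) {y : Euc N}
    (hy : y ∈ E) :
    (∫⁻ x in Ω, ENNReal.ofReal (K x y * V x * ρ x))⁻¹ ≤ capaV Ω V ρ K E := by
  refine ENNReal.le_of_forall_nnreal_lt fun r hr => ?_
  have hδ : BoundaryMeasure Ω (Measure.dirac y) := boundaryMeasure_dirac (hE hy)
  have hadm : ∫⁻ x in Ω, poissonPot K (r • Measure.dirac y) x * ENNReal.ofReal (V x * ρ x)
      ≤ 1 := by
    simp only [poissonPot, lintegral_smul_measure, lintegral_dirac, ENNReal.smul_def, smul_eq_mul,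
      mul_assoc]
    rw [lintegral_const_mul' _ _ ENNReal.coe_ne_top, ← hK.setLIntegral_ofReal_mul hΩ (hE hy)]
    exact ENNReal.le_inv_iff_mul_le.1 hr.le
  calc (r : ℝ≥0∞) = (r • Measure.dirac y) E := by simp [Measure.dirac_apply_of_mem hy]
    _ ≤ capaV Ω V ρ K E :=
      le_capaV _ (by simp [hδ.2]) (by simp [Measure.dirac_apply' _ hEm.compl, hy]) hadm

theorem IsPoissonKernelFor.capaV_le_iSup_inv (hK : IsPoissonKernelFor Ω W ρ nrm K)
    (hΩ : MeasurableSet Ω) (hEm : MeasurableSet E) :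
    capaV Ω V ρ K E ≤ ⨆ y ∈ E, (∫⁻ x in Ω, ENNReal.ofReal (K x y * V x * ρ x))⁻¹ := by
  refine capaV_le fun μ _ hμΩ _ hadm => ?_
  set S := ⨆ y ∈ E, (∫⁻ x in Ω, ENNReal.ofReal (K x y * V x * ρ x))⁻¹
  have hS : ∀ y ∈ E, S⁻¹ ≤ ∫⁻ x in Ω, ENNReal.ofReal (K x y * V x * ρ x) := fun y hy =>
    ENNReal.inv_le_iff_inv_le.2
      (le_biSup (fun y => (∫⁻ x in Ω, ENNReal.ofReal (K x y * V x * ρ x))⁻¹) hy)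
  have hμ_frontier : ∀ᵐ y ∂μ, y ∈ frontier Ω :=
    (measure_eq_zero_iff_ae_notMem.1 hμΩ).mono fun y hy => not_not.1 hy
  have hμE : S⁻¹ * μ E ≤ 1 := calc
    S⁻¹ * μ E = ∫⁻ _ in E, S⁻¹ ∂μ := (setLIntegral_const _ _).symm
    _ ≤ ∫⁻ y in E, (∫⁻ x in Ω, ENNReal.ofReal (K x y * V x * ρ x)) ∂μ :=
      setLIntegral_mono' hEm hS
    _ ≤ ∫⁻ y, (∫⁻ x in Ω, ENNReal.ofReal (K x y) * ENNReal.ofReal (V x * ρ x)) ∂μ := by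
      refine (setLIntegral_le_lintegral _ _).trans_eq (lintegral_congr_ae ?_)
      exact hμ_frontier.mono fun y hy => hK.setLIntegral_ofReal_mul hΩ hy
    _ ≤ ∫⁻ x in Ω, poissonPot K μ x * ENNReal.ofReal (V x * ρ x) :=
      lintegral_lintegral_mul_le_of_continuousOn isClosed_frontier.measurableSet hμΩ
        (fun _ _ => ENNReal.ofReal_ne_top)
        ((ae_restrict_mem hΩ).mono fun x hx =>
          ENNReal.continuous_ofReal.comp_continuousOn (hK.2.1 x hx))
        (fun y hy => (hK.aemeasurable hy).ennreal_ofReal) _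
    _ ≤ 1 := hadm
  rwa [← ENNReal.le_inv_iff_mul_le, ENNReal.inv_le_inv] at hμE

theorem IsPoissonKernelFor.capaV_eq_iSup_inv (hK : IsPoissonKernelFor Ω W ρ nrm K)
    (hΩ : MeasurableSet Ω) (hE : E ⊆ frontier Ω) (hEm : MeasurableSet E) :
    capaV Ω V ρ K E = ⨆ y ∈ E, (∫⁻ x in Ω, ENNReal.ofReal (K x y * V x * ρ x))⁻¹ :=
  (hK.capaV_le_iSup_inv hΩ hEm).antisymm
    (iSup₂_le fun _ hy => hK.inv_le_capaV hΩ hE hEm hy)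

end Capacity

theorem capacity_formula_and_max_property_general
    {N : ℕ} (Ω : Set (Euc N)) (hΩ : IsC2Domain Ω)
    (V ρ : Euc N → ℝ)
    (nrm : Euc N → Euc N)
    (K : Euc N → Euc N → ℝ) (hK : IsPoissonKernelFor Ω (fun _ => 0) ρ nrm K) :
    (∀ E : Set (Euc N), E ⊆ frontier Ω → MeasurableSet E →
      capaV Ω V ρ K E ≤
        ⨆ y ∈ E, (∫⁻ x in Ω, ENNReal.ofReal (K x y * V x * ρ x))⁻¹) ∧
    (∀ E : Set (Euc N), E ⊆ frontier Ω → IsCompact E →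
      capaV Ω V ρ K E =
        ⨆ y ∈ E, (∫⁻ x in Ω, ENNReal.ofReal (K x y * V x * ρ x))⁻¹) ∧
    (∀ E₁ E₂ : Set (Euc N), E₁ ⊆ frontier Ω → E₂ ⊆ frontier Ω →
      MeasurableSet E₁ → MeasurableSet E₂ →
      capaV Ω V ρ K (E₁ ∪ E₂) = max (capaV Ω V ρ K E₁) (capaV Ω V ρ K E₂)) := by
  have hcap : ∀ E : Set (Euc N), E ⊆ frontier Ω → MeasurableSet E → capaV Ω V ρ K E =
      ⨆ y ∈ E, (∫⁻ x in Ω, ENNReal.ofReal (K x y * V x * ρ x))⁻¹ :=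
    fun E hE hEm => hK.capaV_eq_iSup_inv hΩ.1.measurableSet hE hEm
  refine ⟨fun E hE hEm => (hcap E hE hEm).le, fun E hE hEc => hcap E hE hEc.measurableSet,
    fun E₁ E₂ h₁ h₂ hm₁ hm₂ => ?_⟩
  rw [hcap _ (union_subset h₁ h₂) (hm₁.union hm₂), hcap E₁ h₁ hm₁, hcap E₂ h₂ hm₂, iSup_union]

/-- **Proposition 3.5.** The set function C_V satisfies
C_V(E) ≤ sup_{y∈E} (∫_Ω K^Ω(x,y) V ρ dx)⁻¹ for every Borel E ⊂ ∂Ω, with equality if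
E is compact; moreover C_V(E₁ ∪ E₂) = max{C_V(E₁), C_V(E₂)}. -/
theorem capacity_formula_and_max_property
    {N : ℕ} (hN : 2 ≤ N) (Ω : Set (Euc N)) (hΩ : IsC2Domain Ω)
    (V ρ : Euc N → ℝ) (hV0 : ∀ x ∈ Ω, 0 ≤ V x) (hVloc : LocBddOn Ω V)
    (hρ : IsFirstEigenfunction Ω ρ)
    (nrm : Euc N → Euc N) (hnrm : IsOuterNormal Ω nrm)
    (K : Euc N → Euc N → ℝ) (hK : IsPoissonKernelFor Ω (fun _ => 0) ρ nrm K) :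
    (∀ E : Set (Euc N), E ⊆ frontier Ω → MeasurableSet E →
      capaV Ω V ρ K E ≤
        ⨆ y ∈ E, (∫⁻ x in Ω, ENNReal.ofReal (K x y * V x * ρ x))⁻¹) ∧
    (∀ E : Set (Euc N), E ⊆ frontier Ω → IsCompact E →
      capaV Ω V ρ K E =
        ⨆ y ∈ E, (∫⁻ x in Ω, ENNReal.ofReal (K x y * V x * ρ x))⁻¹) ∧
    (∀ E₁ E₂ : Set (Euc N), E₁ ⊆ frontier Ω → E₂ ⊆ frontier Ω →
      MeasurableSet E₁ → MeasurableSet E₂ →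
      capaV Ω V ρ K (E₁ ∪ E₂) = max (capaV Ω V ρ K E₁) (capaV Ω V ρ K E₂)) :=
  capacity_formula_and_max_property_general Ω hΩ V ρ nrm K hK

end
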